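/- arXiv:2006.01391 — 4 statements merged into one kernel-verified Lean document; each statement's English description precedes it below -/
import Mathlib

section
/- For S_N ~ NBM(π, p) with π = (f_N(1), f_N(2), ...), the distribution function satisfies F_{S_N}(x) = E(F_N(Z)) for each x ≥ 0, where Z ~ NegBin(x+1, 1-p), i.e., ∑_{k=1}^∞ f_N(k)·NB(k,p)(x) = ∑_{i=0}^∞ F_N(i)·nb(x+1, 1-p)(i). -/
/-!
Both sides are the sum of `f k * nb (x + 1) (1 - p) i` over the pairs `k ≤ i`. Indeed
`NBcdf k p x` is the tail `∑_{i ≥ k}` of the probabilities `nb (x + 1) (1 - p) i`, which sum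
to `1`; summing over `i` first gives the left side, over `k` first the right side. The double
series converges absolutely as soon as `f` is summable, which justifies the exchange.
-/

/-- The negative binomial probability function `nb(k,p)(x) = C(k+x-1,x) p^k (1-p)^x`. -/
noncomputable def nb (k : ℕ) (p : ℝ) (x : ℕ) : ℝ :=
  (Nat.choose (k + x - 1) x : ℝ) * p ^ k * (1 - p) ^ x

/-- The negative binomial distribution function
`NB(k,p)(x) = 1 - ∑_{i=0}^{k-1} nb(x+1, 1-p)(i)`. -/
noncomputable def NBcdf (k : ℕ) (p : ℝ) (x : ℕ) : ℝ :=
  1 - ∑ i ∈ Finset.range k, nb (x + 1) (1 - p) i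

open Finset

theorem tsum_mul_tsum_nat_add_eq_tsum_sum_range_mul {R : Type*} [NormedRing R] [CompleteSpace R]
    {f g : ℕ → R} (hf : Summable (‖f ·‖)) (hg : Summable (‖g ·‖)) :
    ∑' k, f k * ∑' i, g (i + k) = ∑' i, (∑ k ∈ range (i + 1), f k) * g i := by
  set F : ℕ → ℕ → R := fun k i => if k ≤ i then f k * g i else 0
  have hF : Summable (Function.uncurry F) := by
    refine .of_norm_bounded (hf.mul_norm hg) fun ⟨k, i⟩ => ?_
    by_cases hki : k ≤ i <;> simp [F, hki]
  have hrow : ∀ k, ∑' i, F k i = f k * ∑' i, g (i + k) := by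
    intro k
    have hhead : ∑ i ∈ range k, F k i = 0 :=
      sum_eq_zero fun i hi => if_neg (by simpa using hi)
    have hFk : Summable (F k) := hF.prod_factor k
    rw [← hFk.sum_add_tsum_nat_add k, hhead, zero_add,
      ← ((summable_nat_add_iff k).2 hg.of_norm).tsum_mul_left]
    exact tsum_congr fun i => if_pos (Nat.le_add_left k i)
  have hcol : ∀ i, ∑' k, F k i = (∑ k ∈ range (i + 1), f k) * g i := by
    intro i
    rw [tsum_eq_sum (s := range (i + 1)) fun k hk => if_neg (by simpa [Nat.lt_succ_iff] using hk),
      sum_mul]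
    exact sum_congr rfl fun k hk => if_pos (Nat.lt_succ_iff.1 (mem_range.1 hk))
  simp_rw [← hrow, ← hcol]
  exact hF.tsum_comm.symm

theorem nb_succ_eq (k : ℕ) (q : ℝ) (i : ℕ) :
    nb (k + 1) q i = q ^ (k + 1) * ((i + k).choose k * (1 - q) ^ i) := by
  rw [nb, Nat.add_right_comm, Nat.add_sub_cancel, add_comm k i, Nat.choose_symm_add]
  ring

theorem hasSum_nb_succ (k : ℕ) {q : ℝ} (hq : ‖1 - q‖ < 1) : HasSum (nb (k + 1) q) 1 := by
  have hq0 : q ≠ 0 := by rintro rfl; simp at hq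
  have h := (hasSum_choose_mul_geometric_of_norm_lt_one k hq).mul_left (q ^ (k + 1))
  rw [sub_sub_cancel, mul_one_div_cancel (pow_ne_zero _ hq0)] at h
  exact h.congr_fun fun i => nb_succ_eq k q i

theorem NBcdf_eq_tsum_nb_nat_add {p : ℝ} (hp : ‖p‖ < 1) (k x : ℕ) :
    NBcdf k p x = ∑' i, nb (x + 1) (1 - p) (i + k) := by
  have h := hasSum_nb_succ x (q := 1 - p) (by rwa [sub_sub_cancel])
  rw [NBcdf, sub_eq_iff_eq_add', h.summable.sum_add_tsum_nat_add k, h.tsum_eq]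

theorem nbm_cdf_repr_general (p : ℝ) (hp0 : 0 < p) (hp1 : p < 1)
    (f : ℕ → ℝ) (hfsum : ∑' k : ℕ, f k = 1)
    (x : ℕ) :
    ∑' k : ℕ, f k * NBcdf k p x =
      ∑' i : ℕ, (∑ k ∈ Finset.range (i + 1), f k) * nb (x + 1) (1 - p) i := by
  have hp : ‖p‖ < 1 := by rwa [Real.norm_of_nonneg hp0.le]
  have hf : Summable f := by
    by_contra h
    simp [tsum_eq_zero_of_not_summable h] at hfsum
  have hnb := hasSum_nb_succ x (q := 1 - p) (by rwa [sub_sub_cancel])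
  simp_rw [NBcdf_eq_tsum_nb_nat_add hp]
  exact tsum_mul_tsum_nat_add_eq_tsum_sum_range_mul hf.norm hnb.summable.norm

/-- For `S_N ~ NBM(π, p)` with `π = (f 1, f 2, ...)`, the distribution function
satisfies `F_{S_N}(x) = E(F_N(Z))` where `Z ~ NegBin(x+1, 1-p)`, i.e.
`∑_{k≥1} f k · NB(k,p)(x) = ∑_{i≥0} F_N(i) · nb(x+1, 1-p)(i)`, with
`F_N(i) = ∑_{k=1}^i f k`. -/
theorem nbm_cdf_repr (p : ℝ) (hp0 : 0 < p) (hp1 : p < 1)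
    (f : ℕ → ℝ) (hf0 : f 0 = 0) (hf : ∀ k, 0 ≤ f k) (hfsum : ∑' k : ℕ, f k = 1)
    (x : ℕ) :
    ∑' k : ℕ, f k * NBcdf k p x =
      ∑' i : ℕ, (∑ k ∈ Finset.range (i + 1), f k) * nb (x + 1) (1 - p) i :=
  nbm_cdf_repr_general p hp0 hp1 f hfsum x
end

section
/- The equilibrium distribution of a negative binomial mixture NBM(π, p) with π = (f_N(1), f_N(2), ...) and E(N) < ∞ is again a negative binomial mixture NBM(π_e, p), where π_e = (f_{Ne}(1), f_{Ne}(2), ...) with f_{Ne}(j) = F̄_N(j-1)/E(N). That is, F̄_{S_N}(x)/E(S_N) = ∑_{j=1}^∞ (F̄_N(j-1)/E(N))·nb(j,p)(x) for all x ≥ 0. -/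
open Finset

lemma nb_nonneg {p : ℝ} (hp0 : 0 ≤ p) (hp1 : p ≤ 1) (k x : ℕ) : 0 ≤ nb k p x := by
  have : 0 ≤ 1 - p := sub_nonneg.2 hp1
  unfold nb
  positivity

lemma sum_range_nb_zero (p : ℝ) (x : ℕ) : ∑ y ∈ range (x + 1), nb 0 p y = 1 := by
  rw [sum_range_succ', sum_eq_zero fun y _ => ?_] <;> simp [nb]

lemma sum_range_nb_sub_nb_succ {p : ℝ} (hp : p ≠ 0) (k x : ℕ) :
    ∑ y ∈ range (x + 1), (nb k p y - nb (k + 1) p y) = (1 - p) / p * nb (k + 1) p x := by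
  induction x with
  | zero =>
    simp only [zero_add, sum_range_one, nb, Nat.choose_zero_right, pow_zero]
    field_simp
    ring
  | succ x ih =>
    rw [sum_range_succ, ih]
    have pascal :
        ((k + x + 1).choose (x + 1) : ℝ) = (k + x).choose x + (k + x).choose (x + 1) :=
      mod_cast Nat.choose_succ_succ' (k + x) x
    simp only [nb, show k + (x + 1) - 1 = k + x by omega, show k + 1 + x - 1 = k + x by omega,
      show k + 1 + (x + 1) - 1 = k + x + 1 by omega, pascal]
    field_simp
    ring

lemma one_sub_sum_range_nb {p : ℝ} (hp : p ≠ 0) (k x : ℕ) :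
    1 - ∑ y ∈ range (x + 1), nb k p y = (1 - p) / p * ∑ j ∈ range k, nb (j + 1) p x := by
  induction k with
  | zero => simp [sum_range_nb_zero]
  | succ k ih =>
    rw [sum_range_succ (fun j => nb (j + 1) p x), mul_add, ← ih, ← sum_range_nb_sub_nb_succ hp,
      sum_sub_distrib]
    ring

lemma nb_le_one {p : ℝ} (hp0 : 0 < p) (hp1 : p ≤ 1) (k x : ℕ) : nb k p x ≤ 1 := by
  have hq : 0 ≤ (1 - p) / p := div_nonneg (sub_nonneg.2 hp1) hp0.le
  calc nb k p x ≤ ∑ y ∈ range (x + 1), nb k p y :=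
        single_le_sum (fun y _ => nb_nonneg hp0.le hp1 k y) (self_mem_range_succ x)
    _ = 1 - (1 - p) / p * ∑ j ∈ range k, nb (j + 1) p x := by
        rw [← one_sub_sum_range_nb hp0.ne', sub_sub_cancel]
    _ ≤ 1 := sub_le_self _ (mul_nonneg hq (sum_nonneg fun j _ => nb_nonneg hp0.le hp1 _ _))

lemma tsum_mul_sum_range_eq_tsum_tail_mul {f c : ℕ → ℝ} (hf : ∀ k, 0 ≤ f k)
    (hc : ∀ j, 0 ≤ c j) (hfc : Summable fun k => f k * ∑ j ∈ range k, c j) :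
    ∑' k, f k * ∑ j ∈ range k, c j = ∑' j, (∑' i, f (i + (j + 1))) * c j := by
  set g : ℕ → ℕ → ℝ := fun k j => if j < k then f k * c j else 0
  have hrow : ∀ k, ∑' j, g k j = f k * ∑ j ∈ range k, c j := fun k => by
    rw [tsum_eq_sum (s := range k) fun j hj => if_neg (by simpa using hj), mul_sum]
    exact sum_congr rfl fun j hj => if_pos (mem_range.1 hj)
  have hrow_summable : ∀ k, Summable (g k) := fun k =>
    summable_of_ne_finset_zero (s := range k) fun j hj => if_neg (by simpa using hj)
  have hg_summable : Summable (Function.uncurry g) := by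
    refine (summable_prod_of_nonneg fun q => ?_).2 ⟨hrow_summable, ?_⟩
    · exact ite_nonneg (mul_nonneg (hf _) (hc _)) le_rfl
    · simpa only [Function.uncurry_apply_pair, hrow] using hfc
  have hcol : ∀ j, ∑' k, g k j = (∑' i, f (i + (j + 1))) * c j := fun j => by
    have hcol_summable : Summable fun k => g k j := hg_summable.prod_symm.prod_factor j
    rw [← hcol_summable.sum_add_tsum_nat_add (j + 1),
      sum_eq_zero fun k hk => if_neg (by simpa using hk), zero_add, ← tsum_mul_right]
    exact tsum_congr fun i => if_pos (by omega)
  calc ∑' k, f k * ∑ j ∈ range k, c j = ∑' k, ∑' j, g k j := (tsum_congr hrow).symm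
    _ = ∑' j, ∑' k, g k j := hg_summable.tsum_comm.symm
    _ = ∑' j, (∑' i, f (i + (j + 1))) * c j := tsum_congr hcol

lemma one_sub_sum_range_tsum_mul_nb {p : ℝ} (hp0 : 0 < p) (hp1 : p ≤ 1) {f : ℕ → ℝ}
    (hf : ∀ k, 0 ≤ f k) (hfsum : HasSum f 1) (x : ℕ) :
    1 - ∑ y ∈ range (x + 1), ∑' k, f k * nb k p y
      = (1 - p) / p * ∑' j, (1 - ∑ k ∈ range (j + 1), f k) * nb (j + 1) p x := by
  have hq : 0 ≤ (1 - p) / p := div_nonneg (sub_nonneg.2 hp1) hp0.le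
  set c : ℕ → ℝ := fun j => (1 - p) / p * nb (j + 1) p x with hc
  have htail : ∀ k, 1 - ∑ y ∈ range (x + 1), nb k p y = ∑ j ∈ range k, c j := fun k => by
    rw [one_sub_sum_range_nb hp0.ne', mul_sum]
  have hmix_summable : ∀ y, Summable fun k => f k * nb k p y := fun y =>
    hfsum.summable.of_nonneg_of_le (fun k => mul_nonneg (hf k) (nb_nonneg hp0.le hp1 k y))
      fun k => mul_le_of_le_one_right (hf k) (nb_le_one hp0 hp1 k y)
  have hsplit : ∀ k, f k * ∑ j ∈ range k, c j = f k - ∑ y ∈ range (x + 1), f k * nb k p y :=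
    fun k => by rw [← htail, mul_sub, mul_one, mul_sum]
  have hfc : Summable fun k => f k * ∑ j ∈ range k, c j := by
    simpa only [hsplit] using hfsum.summable.sub (summable_sum fun y _ => hmix_summable y)
  calc 1 - ∑ y ∈ range (x + 1), ∑' k, f k * nb k p y
      = ∑' k, f k * ∑ j ∈ range k, c j := by
        rw [tsum_congr hsplit, hfsum.summable.tsum_sub (summable_sum fun y _ => hmix_summable y),
          hfsum.tsum_eq, Summable.tsum_finsetSum fun y _ => hmix_summable y]
    _ = ∑' j, (∑' i, f (i + (j + 1))) * c j :=
        tsum_mul_sum_range_eq_tsum_tail_mul hf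
          (fun j => mul_nonneg hq (nb_nonneg hp0.le hp1 _ _)) hfc
    _ = (1 - p) / p * ∑' j, (1 - ∑ k ∈ range (j + 1), f k) * nb (j + 1) p x := by
        rw [← tsum_mul_left]
        refine tsum_congr fun j => ?_
        rw [((hasSum_nat_add_iff' (j + 1)).2 hfsum).tsum_eq, hc]
        ring

theorem nbm_equilibrium_general (p : ℝ) (hp0 : 0 < p) (hp1 : p < 1)
    (f : ℕ → ℝ) (hf : ∀ k, 0 ≤ f k) (hfsum : ∑' k : ℕ, f k = 1)
    (EN : ℝ)
    (x : ℕ) :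
    (1 - ∑ y ∈ Finset.range (x + 1), ∑' k : ℕ, f k * nb k p y) / (EN * (1 - p) / p) =
      ∑' j : ℕ, ((1 - ∑ k ∈ Finset.range (j + 1), f k) / EN) * nb (j + 1) p x := by
  have hsum : HasSum f 1 := by
    refine hfsum ▸ (Summable.hasSum ?_)
    by_contra h
    simp [tsum_eq_zero_of_not_summable h] at hfsum
  have hq : (1 - p) / p ≠ 0 := div_ne_zero (sub_ne_zero.2 hp1.ne') hp0.ne'
  have hmean : EN * (1 - p) / p = (1 - p) / p * EN := by ring
  rw [one_sub_sum_range_tsum_mul_nb hp0 hp1.le hf hsum, hmean, mul_div_mul_left _ _ hq,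
    ← tsum_div_const]
  exact tsum_congr fun j => (div_mul_eq_mul_div _ _ _).symm

/-- The equilibrium distribution of a negative binomial mixture `NBM(π, p)` with
`π = (f 1, f 2, ...)` and `E(N) < ∞` is again a negative binomial mixture
`NBM(π_e, p)` with `f_Ne j = F̄_N(j-1)/E(N)`: for all `x ≥ 0`,
`F̄_{S_N}(x) / E(S_N) = ∑_{j≥1} (F̄_N(j-1)/E(N)) · nb(j,p)(x)`,
where `E(S_N) = E(N)(1-p)/p`. -/
theorem nbm_equilibrium (p : ℝ) (hp0 : 0 < p) (hp1 : p < 1)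
    (f : ℕ → ℝ) (hf0 : f 0 = 0) (hf : ∀ k, 0 ≤ f k) (hfsum : ∑' k : ℕ, f k = 1)
    (EN : ℝ) (hEN : EN = ∑' k : ℕ, (k : ℝ) * f k)
    (hENsum : Summable fun k : ℕ => (k : ℝ) * f k)
    (x : ℕ) :
    (1 - ∑ y ∈ Finset.range (x + 1), ∑' k : ℕ, f k * nb k p y) / (EN * (1 - p) / p) =
      ∑' j : ℕ, ((1 - ∑ k ∈ Finset.range (j + 1), f k) / EN) * nb (j + 1) p x :=
  nbm_equilibrium_general p hp0 hp1 f hf hfsum EN x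
end

section
/- The distribution of N* = ∑_{j=1}^M N_j, where M ~ TGeometric(ρ) and N_j are i.i.d. with probability function f_N on {1,2,...} independent of M, satisfies the recursion: f_{N*}(1) = ρ·f_N(1), and f_{N*}(k) = (1-ρ)·∑_{i=1}^{k-1} f_N(i)·f_{N*}(k-i) + ρ·f_N(k) for k ≥ 2. -/
/-!
Write `S m = N 0 + ⋯ + N (m - 1)`, so that `N* = S M`. Conditioning on `M` gives
`P(N* = k) = ∑ₘ P(M = m) P(S m = k)`, and since `N m` is independent of `S m`,
`P(S (m + 1) = k) = ∑ᵢ f i P(S m = k - i)`. For `k ≠ 0` the term `m = 0` vanishes; splitting off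
`m = 1` and using `P(M = m + 2) = (1 - ρ) P(M = m + 1)` in the remaining terms turns them into
`(1 - ρ) ∑ᵢ f i P(N* = k - i)`.
-/

open MeasureTheory ProbabilityTheory Finset
open scoped ENNReal

section
variable {Ω : Type*} [MeasurableSpace Ω] {μ : Measure Ω}

lemma measure_add_eq_sum_antidiagonal {X Y : Ω → ℕ} (hX : Measurable X) (hY : Measurable Y)
    (hXY : IndepFun X Y μ) (n : ℕ) :
    μ {ω | X ω + Y ω = n} = ∑ p ∈ antidiagonal n, μ {ω | X ω = p.1} * μ {ω | Y ω = p.2} := by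
  have hset : {ω | X ω + Y ω = n} = ⋃ p ∈ antidiagonal n, X ⁻¹' {p.1} ∩ Y ⁻¹' {p.2} := by
    ext ω; simp
  rw [hset, measure_biUnion_finset]
  · exact sum_congr rfl fun p _ => hXY.measure_inter_preimage_eq_mul _ _
      (measurableSet_singleton _) (measurableSet_singleton _)
  · exact fun p _ p' _ hpp' => Set.disjoint_left.2 fun ω h h' =>
      hpp' (Prod.ext (h.1.symm.trans h'.1) (h.2.symm.trans h'.2))
  · exact fun p _ => (hX (measurableSet_singleton _)).inter (hY (measurableSet_singleton _))

lemma measure_apply_randomIndex_eq_tsum {β : Type*} [MeasurableSpace β]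
    [MeasurableSingletonClass β] {M : Ω → ℕ} {X : ℕ → Ω → β} (hM : Measurable M)
    (hX : ∀ m, Measurable (X m)) (hMX : ∀ m, IndepFun M (X m) μ) (b : β) :
    μ {ω | X (M ω) ω = b} = ∑' m, μ {ω | M ω = m} * μ {ω | X m ω = b} := by
  have hset : {ω | X (M ω) ω = b} = ⋃ m, M ⁻¹' {m} ∩ X m ⁻¹' {b} := by
    ext ω; simp
  rw [hset, measure_iUnion]
  · exact tsum_congr fun m => (hMX m).measure_inter_preimage_eq_mul _ _
      (measurableSet_singleton _) (measurableSet_singleton _)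
  · exact fun m m' hmm' => Set.disjoint_left.2 fun ω h h' => hmm' (h.1.symm.trans h'.1)
  · exact fun m => (hM (measurableSet_singleton _)).inter (hX m (measurableSet_singleton _))

variable {M : Ω → ℕ} {N : ℕ → Ω → ℕ} {q : ℕ → ℝ≥0∞}

lemma measure_sum_range_succ_eq_sum_mul (hN : ∀ j, Measurable (N j)) (hindep : iIndepFun N μ)
    (hq : ∀ j i, μ {ω | N j ω = i} = q i) (m k : ℕ) :
    μ {ω | ∑ j ∈ range (m + 1), N j ω = k}
      = ∑ i ∈ range (k + 1), q i * μ {ω | ∑ j ∈ range m, N j ω = k - i} := by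
  have hindep' : IndepFun (N m) (fun ω => ∑ j ∈ range m, N j ω) μ := by
    simpa only [← Finset.sum_fn] using (hindep.indepFun_sum_range_succ hN m).symm
  rw [← Nat.sum_antidiagonal_eq_sum_range_succ fun i j => q i * μ {ω | ∑ j ∈ range m, N j ω = j}]
  simp_rw [sum_range_succ, add_comm _ (N m _)]
  rw [measure_add_eq_sum_antidiagonal (hN m) (measurable_sum _ fun j _ => hN j) hindep']
  simp only [hq]

lemma measure_randomSum_eq_tsum_succ (hM : Measurable M) (hN : ∀ j, Measurable (N j))
    (hMN : IndepFun M (fun ω j => N j ω) μ) {k : ℕ} (hk : k ≠ 0) :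
    μ {ω | ∑ j ∈ range (M ω), N j ω = k}
      = ∑' m, μ {ω | M ω = m + 1} * μ {ω | ∑ j ∈ range (m + 1), N j ω = k} := by
  have hMS (m : ℕ) : IndepFun M (fun ω => ∑ j ∈ range m, N j ω) μ :=
    hMN.comp measurable_id (measurable_sum _ fun j _ => measurable_pi_apply j)
  rw [measure_apply_randomIndex_eq_tsum (X := fun m ω => ∑ j ∈ range m, N j ω) hM
    (fun m => measurable_sum _ fun j _ => hN j) hMS, tsum_eq_zero_add' ENNReal.summable]
  simp [hk.symm]

theorem measure_randomSum_recursion (hM : Measurable M) (hN : ∀ j, Measurable (N j))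
    (hindep : iIndepFun N μ) (hMN : IndepFun M (fun ω j => N j ω) μ)
    (hq : ∀ j i, μ {ω | N j ω = i} = q i) (hq0 : q 0 = 0) (c : ℝ≥0∞)
    (hgeom : ∀ m, μ {ω | M ω = m + 2} = c * μ {ω | M ω = m + 1}) {k : ℕ} (hk : k ≠ 0) :
    μ {ω | ∑ j ∈ range (M ω), N j ω = k}
      = c * ∑ i ∈ Ico 1 k, q i * μ {ω | ∑ j ∈ range (M ω), N j ω = k - i}
        + μ {ω | M ω = 1} * q k := by
  -- `h n = μ {S M = n, M ≠ 0}` agrees with the law of `S M` off `0` and vanishes at `0`.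
  obtain ⟨h, h_def⟩ : ∃ h : ℕ → ℝ≥0∞, ∀ n,
      h n = ∑' m, μ {ω | M ω = m + 1} * μ {ω | ∑ j ∈ range (m + 1), N j ω = n} := ⟨_, fun _ => rfl⟩
  have hconv := measure_sum_range_succ_eq_sum_mul hN hindep hq
  have h_eq {n : ℕ} (hn : n ≠ 0) : μ {ω | ∑ j ∈ range (M ω), N j ω = n} = h n :=
    (measure_randomSum_eq_tsum_succ hM hN hMN hn).trans (h_def n).symm
  have h_zero : h 0 = 0 := (h_def 0).trans <| ENNReal.tsum_eq_zero.2 fun m => by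
    rw [hconv, sum_range_one, hq0, zero_mul, mul_zero]
  have h_rec : h k = μ {ω | M ω = 1} * q k + c * ∑ i ∈ range (k + 1), q i * h (k - i) := by
    rw [h_def k, tsum_eq_zero_add' ENNReal.summable]
    congr 1
    · simp [hq]
    · calc ∑' m, μ {ω | M ω = m + 1 + 1} * μ {ω | ∑ j ∈ range (m + 1 + 1), N j ω = k}
          = ∑' m, ∑ i ∈ range (k + 1), c * (q i * (μ {ω | M ω = m + 1} *
              μ {ω | ∑ j ∈ range (m + 1), N j ω = k - i})) := by
            refine tsum_congr fun m => ?_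
            rw [hgeom, hconv, mul_sum]
            exact sum_congr rfl fun i _ => by ring
        _ = c * ∑ i ∈ range (k + 1), q i * h (k - i) := by
            rw [Summable.tsum_finsetSum fun i _ => ENNReal.summable, mul_sum]
            simp_rw [ENNReal.tsum_mul_left, h_def]
  rw [h_eq hk, h_rec, add_comm, range_eq_Ico, sum_Ico_succ_top (by omega),
    sum_eq_sum_Ico_succ_bot (by omega), hq0, zero_mul, zero_add, Nat.sub_self, h_zero, mul_zero,
    add_zero]
  congr 2
  exact sum_congr rfl fun i hi => by rw [h_eq (by simp at hi; omega)]

end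

theorem Nstar_pmf_recursion_general
    {Ω : Type*} [MeasureSpace Ω] [IsProbabilityMeasure (ℙ : Measure Ω)]
    (ρ : ℝ) (hρ1 : ρ < 1)
    (f : ℕ → ℝ) (hf0 : f 0 = 0)
    (M : Ω → ℕ) (N : ℕ → Ω → ℕ)
    (hMmeas : Measurable M) (hNmeas : ∀ j, Measurable (N j))
    (hM : ∀ m, 1 ≤ m → (ℙ {ω | M ω = m}).toReal = ρ * (1 - ρ) ^ (m - 1))
    (hN : ∀ j k, (ℙ {ω | N j ω = k}).toReal = f k)
    (hNindep : iIndepFun N ℙ)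
    (hMN : IndepFun M (fun ω j => N j ω) ℙ) :
    (ℙ {ω | ∑ j ∈ Finset.range (M ω), N j ω = 1}).toReal = ρ * f 1 ∧
      ∀ k, 2 ≤ k →
        (ℙ {ω | ∑ j ∈ Finset.range (M ω), N j ω = k}).toReal =
          (1 - ρ) * ∑ i ∈ Finset.Ico 1 k,
              f i * (ℙ {ω | ∑ j ∈ Finset.range (M ω), N j ω = k - i}).toReal
            + ρ * f k := by
  have hident (j i : ℕ) : ℙ {ω | N j ω = i} = ℙ {ω | N 0 ω = i} :=
    (ENNReal.toReal_eq_toReal_iff' (by finiteness) (by finiteness)).1 ((hN j i).trans (hN 0 i).symm)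
  have hN0 : ℙ {ω | N 0 ω = 0} = 0 :=
    ((ENNReal.toReal_eq_zero_iff _).1 ((hN 0 0).trans hf0)).resolve_right (by finiteness)
  have hgeom (m : ℕ) :
      ℙ {ω | M ω = m + 2} = ENNReal.ofReal (1 - ρ) * ℙ {ω | M ω = m + 1} := by
    rw [← ENNReal.toReal_eq_toReal_iff' (by finiteness) (by finiteness), ENNReal.toReal_mul,
      ENNReal.toReal_ofReal (by linarith), hM _ (by omega), hM _ (by omega),
      show m + 2 - 1 = m + 1 by omega, Nat.add_sub_cancel, pow_succ]
    ring
  have hrec (k : ℕ) (hk : k ≠ 0) :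
      (ℙ {ω | ∑ j ∈ Finset.range (M ω), N j ω = k}).toReal =
        (1 - ρ) * ∑ i ∈ Finset.Ico 1 k,
          f i * (ℙ {ω | ∑ j ∈ Finset.range (M ω), N j ω = k - i}).toReal + ρ * f k := by
    rw [measure_randomSum_recursion hMmeas hNmeas hNindep hMN hident hN0 _ hgeom hk,
      ENNReal.toReal_add (ENNReal.mul_ne_top ENNReal.ofReal_ne_top
        (ENNReal.sum_ne_top.2 fun _ _ => by finiteness)) (by finiteness),
      ENNReal.toReal_mul, ENNReal.toReal_mul,
      ENNReal.toReal_sum (fun _ _ => by finiteness), ENNReal.toReal_ofReal (by linarith),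
      hM 1 le_rfl, hN 0]
    simp only [ENNReal.toReal_mul, hN 0, Nat.sub_self, pow_zero, mul_one]
  exact ⟨by simpa using hrec 1 one_ne_zero, fun k hk => hrec k (by omega)⟩

/-- The distribution of `N* = ∑_{j=1}^M N_j`, where `M ~ TGeometric ρ` and the `N_j`
are i.i.d. with probability function `f` on `{1,2,...}` independent of `M`, satisfies
`f_{N*}(1) = ρ f(1)` and
`f_{N*}(k) = (1-ρ) ∑_{i=1}^{k-1} f(i) f_{N*}(k-i) + ρ f(k)` for `k ≥ 2`. -/
theorem Nstar_pmf_recursion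
    {Ω : Type*} [MeasureSpace Ω] [IsProbabilityMeasure (ℙ : Measure Ω)]
    (ρ : ℝ) (hρ0 : 0 < ρ) (hρ1 : ρ < 1)
    (f : ℕ → ℝ) (hf0 : f 0 = 0) (hf : ∀ k, 0 ≤ f k) (hfsum : ∑' k : ℕ, f k = 1)
    (M : Ω → ℕ) (N : ℕ → Ω → ℕ)
    (hMmeas : Measurable M) (hNmeas : ∀ j, Measurable (N j))
    (hM : ∀ m, 1 ≤ m → (ℙ {ω | M ω = m}).toReal = ρ * (1 - ρ) ^ (m - 1))
    (hM0 : ℙ {ω | M ω = 0} = 0)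
    (hN : ∀ j k, (ℙ {ω | N j ω = k}).toReal = f k)
    (hNindep : iIndepFun N ℙ)
    (hMN : IndepFun M (fun ω j => N j ω) ℙ) :
    (ℙ {ω | ∑ j ∈ Finset.range (M ω), N j ω = 1}).toReal = ρ * f 1 ∧
      ∀ k, 2 ≤ k →
        (ℙ {ω | ∑ j ∈ Finset.range (M ω), N j ω = k}).toReal =
          (1 - ρ) * ∑ i ∈ Finset.Ico 1 k,
              f i * (ℙ {ω | ∑ j ∈ Finset.range (M ω), N j ω = k - i}).toReal
            + ρ * f k :=
  Nstar_pmf_recursion_general ρ hρ1 f hf0 M N hMmeas hNmeas hM hN hNindep hMN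
end

section
/- In the Gerber-Dickson model with Geometric(p) claims where p > 1/2 (so μ = (1-p)/p < 1), the Pollaczeck–Khinchine formula (1-μ)∑_{k=1}^∞ P(S*_k ≥ u)μ^k evaluates to ψ(u) = ((1-p)/p)^{u+1} for all u ≥ 0, where S*_k ~ NegBin(k,p). -/
lemma choose_le_two_pow' (n k : ℕ) : n.choose k ≤ 2 ^ n := by
  rcases le_or_gt k n with h | h
  · calc n.choose k ≤ ∑ m ∈ Finset.range (n + 1), n.choose m :=
        Finset.single_le_sum (fun _ _ => Nat.zero_le _) (Finset.mem_range.2 (by omega))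
      _ = 2 ^ n := Nat.sum_range_choose n
  · simp [Nat.choose_eq_zero_of_lt h]

lemma choose_symm_add' (a b : ℕ) : (a + b).choose a = (a + b).choose b := by
  have := Nat.choose_symm (n := a + b) (k := a) (by omega)
  simpa [show a + b - a = b by omega] using this.symm

/-- In the Gerber-Dickson model with `Geometric p` claims, `p > 1/2`
(so `μ = (1-p)/p < 1`), the Pollaczeck–Khinchine formula
`(1-μ) ∑_{k=1}^∞ P(S*_k ≥ u) μ^k` with `S*_k ~ NegBin(k,p)` evaluates to
`ψ u = ((1-p)/p)^{u+1}` for all `u ≥ 0`.  Here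
`P(S*_k ≥ u) = ∑_{x ≥ u} nb(k,p)(x) = ∑' j, nb(k,p)(u+j)`. -/
theorem pk_geometric (p : ℝ) (hp : 1 / 2 < p) (hp1 : p < 1) (u : ℕ) :
    (1 - (1 - p) / p) *
        ∑' k : ℕ, (∑' j : ℕ, nb (k + 1) p (u + j)) * ((1 - p) / p) ^ (k + 1) =
      ((1 - p) / p) ^ (u + 1) := by
  have hp0 : (0 : ℝ) < p := by linarith
  set q : ℝ := 1 - p with hq
  have hq0 : 0 < q := by simp only [hq]; linarith
  have hq2 : 2 * q < 1 := by simp only [hq]; linarith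
  have hqp : q < p := by simp only [hq]; linarith
  have hq1 : q < 1 := by linarith
  have hμ1 : q / p < 1 := (div_lt_one hp0).2 hqp
  have hμ0 : (0 : ℝ) ≤ q / p := div_nonneg hq0.le hp0.le
  have hμne : (1 : ℝ) - q / p ≠ 0 := by linarith
  set F : ℕ → ℕ → ℝ := fun k j => ((k + u + j).choose k : ℝ) * q ^ (k + j) with hF
  have hFsum : Summable (Function.uncurry F) := by
    have hgeo : Summable (fun n : ℕ => (2 * q) ^ n) :=
      summable_geometric_of_lt_one (by positivity) hq2
    have hbig : Summable (fun kj : ℕ × ℕ => (2 * q) ^ kj.1 * (2 * q) ^ kj.2) :=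
      hgeo.mul_of_nonneg hgeo (fun n => by positivity) (fun n => by positivity)
    have hnonneg : ∀ kj : ℕ × ℕ, 0 ≤ Function.uncurry F kj := by
      intro kj; simp only [hF, Function.uncurry]; positivity
    have hle : ∀ kj : ℕ × ℕ,
        Function.uncurry F kj ≤ 2 ^ u * ((2 * q) ^ kj.1 * (2 * q) ^ kj.2) := by
      rintro ⟨k, j⟩
      simp only [hF, Function.uncurry]
      have h1 : ((k + u + j).choose k : ℝ) ≤ 2 ^ (k + u + j) := by
        exact_mod_cast choose_le_two_pow' (k + u + j) k
      calc ((k + u + j).choose k : ℝ) * q ^ (k + j)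
          ≤ 2 ^ (k + u + j) * q ^ (k + j) :=
            mul_le_mul_of_nonneg_right h1 (by positivity)
        _ = 2 ^ u * ((2 * q) ^ k * (2 * q) ^ j) := by
            rw [mul_pow, mul_pow, pow_add, pow_add, pow_add]; ring
    exact Summable.of_nonneg_of_le hnonneg hle (hbig.mul_left _)
  have hterm : ∀ k : ℕ,
      (∑' j : ℕ, nb (k + 1) p (u + j)) * ((1 - p) / p) ^ (k + 1)
        = q ^ (u + 1) * ∑' j : ℕ, F k j := by
    intro k
    rw [← tsum_mul_right, ← tsum_mul_left]
    apply tsum_congr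
    intro j
    have hidx : (k + 1) + (u + j) - 1 = k + u + j := by omega
    have hsymm : (k + u + j).choose (u + j) = (k + u + j).choose k := by
      rw [show k + u + j = k + (u + j) by omega]
      exact (choose_symm_add' k (u + j)).symm
    simp only [nb, hidx, hsymm, hF, ← hq]
    rw [div_pow]
    field_simp
    ring
  rw [tsum_congr hterm, tsum_mul_left]
  have hswap : ∑' (k : ℕ) (j : ℕ), F k j = ∑' (j : ℕ) (k : ℕ), F k j :=
    (Summable.tsum_comm hFsum).symm
  rw [hswap]
  have hqnorm : ‖q‖ < 1 := by rw [Real.norm_eq_abs, abs_of_pos hq0]; exact hq1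
  have hinner : ∀ j : ℕ, ∑' k : ℕ, F k j = (1 / p ^ (u + 1)) * (q / p) ^ j := by
    intro j
    have h1 : ∀ k : ℕ, F k j = (((k + (u + j)).choose (u + j) : ℝ) * q ^ k) * q ^ j := by
      intro k
      have hc : (k + u + j).choose k = (k + (u + j)).choose (u + j) := by
        rw [show k + u + j = k + (u + j) by omega]
        exact choose_symm_add' k (u + j)
      simp only [hF, hc, pow_add]
      ring
    rw [tsum_congr h1, tsum_mul_right, tsum_choose_mul_geometric_of_norm_lt_one (u + j) hqnorm]
    have hpq : 1 - q = p := by simp [hq]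
    rw [hpq, div_pow]
    field_simp
    ring
  rw [tsum_congr hinner, tsum_mul_left, tsum_geometric_of_lt_one hμ0 hμ1, div_pow]
  rw [show (1 - q / p) * (q ^ (u + 1) * (1 / p ^ (u + 1) * (1 - q / p)⁻¹)) =
      q ^ (u + 1) * (1 / p ^ (u + 1)) * ((1 - q / p) * (1 - q / p)⁻¹) from by ring,
    mul_inv_cancel₀ hμne, mul_one, mul_one_div]
end
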